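/- Let C be a class of functions {±1}^n → {±1} and let 𝒟 be a family of distributions over {±1}^n that is closed under restrictions. Let A be a deterministic learner such that for every D ∈ 𝒟, every f ∈ C, and every k ≥ m, E_{S ~ (D_f)^k}[error(A(S), D_f)] ≤ ε. Let D* be a distribution over {±1}^n that has a depth-d decomposition into distributions in 𝒟, and let f ∈ C. Let m_train ≥ (2^d/ε)·max(2m, 8) and m_test ≥ ln(2·n^{2^d})/(2ε²). Draw independent samples S_train of m_train and S_test of m_test i.i.d. examples from D*_f; define H(ρ) := A((S_train)_ρ) for every depth-d restriction ρ, and let T̂ = T̂(S_train, S_test) be any depth-d decision tree that minimizes error(T∘H, S_test) over all depth-d decision trees T. Then E[error(T̂∘H, D*_f)] ≤ 4ε. -/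

import Mathlib

open scoped Classical

/-- Points of the cube `{±1}^n`, encoded as `Fin n → Bool`. -/
abbrev Cube (n : ℕ) := Fin n → Bool

/-- Restrictions `ρ ∈ {±1,⋆}^n`, with `none` playing the role of `⋆`. -/
abbrev Rst (n : ℕ) := Fin n → Option Bool

/-- Labeled examples. -/
abbrev Lab (n : ℕ) := Cube n × Bool

/-- `x` is consistent with the restriction `ρ`. -/
def Consistent {n : ℕ} (x : Cube n) (ρ : Rst n) : Prop :=
  ∀ i : Fin n, ∀ b : Bool, ρ i = some b → x i = b

/-- The depth (number of non-⋆ coordinates) of a restriction. -/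
def rdepth {n : ℕ} (ρ : Rst n) : ℕ :=
  (Finset.univ.filter (fun i => ρ i ≠ none)).card

/-- `IsDT n d T` : `T` is the set of leaf restrictions of a depth-`d` decision tree over `{±1}^n`. -/
inductive IsDT (n : ℕ) : ℕ → Finset (Rst n) → Prop
  | leaf : IsDT n 0 {fun _ => none}
  | node {d : ℕ} (i : Fin n) {T₀ T₁ : Finset (Rst n)} :
      IsDT n d T₀ → IsDT n d T₁ →
      (∀ ℓ ∈ T₀, ℓ i = none) → (∀ ℓ ∈ T₁, ℓ i = none) →
      IsDT n (d + 1)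
        (T₀.image (fun ℓ => Function.update ℓ i (some false)) ∪
         T₁.image (fun ℓ => Function.update ℓ i (some true)))

/-- Empirical error of a hypothesis on a labeled multiset. -/
noncomputable def errS {n : ℕ} (h : Cube n → Bool) (S : Multiset (Lab n)) : ℝ :=
  ((S.filter (fun p => h p.1 ≠ p.2)).card : ℝ) / (S.card : ℝ)

/-- Empirical error of a partial (`Option Bool`-valued) hypothesis on a labeled multiset;
`⊥ = none` always counts as a misclassification. -/
noncomputable def errSo {n : ℕ} (h : Cube n → Option Bool) (S : Multiset (Lab n)) : ℝ :=
  ((S.filter (fun p => h p.1 ≠ some p.2)).card : ℝ) / (S.card : ℝ)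

/-- True error of a hypothesis with respect to a distribution on labeled examples. -/
noncomputable def errD {n : ℕ} (h : Cube n → Bool) (D : Lab n → ℝ) : ℝ :=
  ∑ p : Lab n, if h p.1 ≠ p.2 then D p else 0

/-- True error of a partial hypothesis with respect to a distribution on labeled examples. -/
noncomputable def errDo {n : ℕ} (h : Cube n → Option Bool) (D : Lab n → ℝ) : ℝ :=
  ∑ p : Lab n, if h p.1 ≠ some p.2 then D p else 0

/-- The multiset of samples of a tuple. -/
def toMS {α : Type*} {m : ℕ} (y : Fin m → α) : Multiset α := ↑(List.ofFn y)

/-- `T ∘ H` : the decision-tree-composed hypothesis. -/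
noncomputable def treeHyp {n : ℕ} (T : Finset (Rst n)) (H : Rst n → Cube n → Bool)
    (x : Cube n) : Bool :=
  if h : ∃ ℓ, ℓ ∈ T ∧ Consistent x ℓ then H h.choose x else false

/-- `P ∘ H` : the subcube-partition-composed hypothesis (`none` = ⊥ off the partition). -/
noncomputable def partHyp {n s : ℕ} (ρ : Fin s → Rst n) (H : Rst n → Cube n → Bool)
    (x : Cube n) : Option Bool :=
  if h : ∃ i, Consistent x (ρ i) then some (H (ρ h.choose) x) else none

/-- `L ∘ H` : the subcube-list-composed hypothesis (first consistent subcube wins). -/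
noncomputable def listHyp {n : ℕ} (H : Rst n → Cube n → Bool) :
    List (Rst n) → Cube n → Option Bool
  | [], _ => none
  | π :: L, x => if Consistent x π then some (H π x) else listHyp H L x

/-- Mass of a distribution on the subcube of a restriction. -/
noncomputable def rmass {n : ℕ} (D : Cube n → ℝ) (ρ : Rst n) : ℝ :=
  ∑ x ∈ Finset.univ.filter (fun x => Consistent x ρ), D x

/-- `D` conditioned on the subcube of the restriction `ρ`. -/
noncomputable def condD {n : ℕ} (D : Cube n → ℝ) (ρ : Rst n) : Cube n → ℝ :=
  fun x => if Consistent x ρ then D x / rmass D ρ else 0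

/-- The labeled distribution `D_f` of `(x, f(x))`, `x ~ D`. -/
def labD {n : ℕ} (D : Cube n → ℝ) (f : Cube n → Bool) : Lab n → ℝ :=
  fun p => if p.2 = f p.1 then D p.1 else 0

/-!
The expected error splits into a training half and a selection half, each at most `2ε`.

Training: every leaf `ℓ` of the true tree `T⋆` carries a conditional distribution in `𝒟`. The
number of training samples landing in a leaf of mass `p` is binomial, and given that number `k`
they are `k` i.i.d. draws from the conditional distribution, so once `k ≥ m` the learner's error
there is at most `p ε`. A Chernoff bound makes `k ≥ m` likely when `p ≥ ε / 2^d`; lighter leaves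
cost at most `ε / 2^d` each, and there are at most `2^d` leaves.

Selection: for each tree, the gap between true and test error is an average of `m_test`
independent bounded terms. Bounding its moment generating function, then applying Jensen and a
union bound over the at most `n^(2^d)` depth-`d` trees, shows that the test-error minimiser `T̂`
is worse than `T⋆` by at most `2ε` in expectation.
-/

open Finset Real

theorem Real.exp_neg_le_one_sub_add_sq_div_two {s : ℝ} (hs : 0 ≤ s) :
    exp (-s) ≤ 1 - s + s ^ 2 / 2 := by
  let g : ℝ → ℝ := fun u => 1 - u + u ^ 2 / 2 - exp (-u)
  have hg : ∀ u, HasDerivAt g (u - 1 + exp (-u)) u := fun u =>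
    ((((hasDerivAt_id u).const_sub 1).add ((hasDerivAt_pow 2 u).div_const 2)).sub
      (hasDerivAt_neg u).exp).congr_deriv (by norm_num; ring)
  have hmono : Monotone g := monotone_of_deriv_nonneg (fun u => (hg u).differentiableAt)
    fun u => by rw [(hg u).deriv]; linarith [add_one_le_exp (-u)]
  have := hmono hs
  simp only [g] at this
  norm_num at this
  linarith

theorem Real.exp_neg_le_inv {x : ℝ} (hx : 0 < x) : exp (-x) ≤ x⁻¹ := by
  rw [exp_neg]
  exact inv_anti₀ hx (by linarith [add_one_le_exp x])

/-- Moment generating function of `μ - X` for a Bernoulli variable `X` of mean `μ`. -/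
theorem bernoulli_mgf_le {μ s : ℝ} (hμ0 : 0 ≤ μ) (hμ1 : μ ≤ 1) (hs : 0 ≤ s) :
    exp (s * μ) * (1 - μ + μ * exp (-s)) ≤ exp (s ^ 2 / 2) := by
  have hquad := exp_neg_le_one_sub_add_sq_div_two hs
  calc exp (s * μ) * (1 - μ + μ * exp (-s))
      ≤ exp (s * μ) * exp (μ * (exp (-s) - 1)) := by
        gcongr
        linarith [add_one_le_exp (μ * (exp (-s) - 1))]
    _ = exp (μ * (exp (-s) - 1 + s)) := by rw [← exp_add]; ring_nf
    _ ≤ exp (s ^ 2 / 2) := by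
        gcongr
        nlinarith [add_one_le_exp (-s), sq_nonneg s]

theorem sum_antidiagonal_choose_mul_pow_mul_pow (x y : ℝ) (M : ℕ) :
    ∑ ij ∈ antidiagonal M, (M.choose ij.1 : ℝ) * x ^ ij.1 * y ^ ij.2 = (x + y) ^ M := by
  simp only [(Commute.all x y).add_pow', nsmul_eq_mul, mul_assoc]

theorem binomial_lower_tail_le {p : ℝ} (hp0 : 0 ≤ p) (hp1 : p ≤ 1) {M m : ℕ}
    (hm : (m : ℝ) ≤ M * p / 2) :
    ∑ ij ∈ (antidiagonal M).filter (·.1 < m), (M.choose ij.1 : ℝ) * p ^ ij.1 * (1 - p) ^ ij.2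
      ≤ exp (-(M * p) / 8) := by
  have hterm : ∀ ij ∈ (antidiagonal M).filter (·.1 < m),
      (M.choose ij.1 : ℝ) * p ^ ij.1 * (1 - p) ^ ij.2
        ≤ exp (log 2 * (M * p / 2)) * ((M.choose ij.1 : ℝ) * (p / 2) ^ ij.1 * (1 - p) ^ ij.2) := by
    intro ij hij
    have hi : (ij.1 : ℝ) ≤ M * p / 2 := le_trans (by exact_mod_cast (mem_filter.1 hij).2.le) hm
    have h2 : (2 : ℝ) ^ ij.1 ≤ exp (log 2 * (M * p / 2)) := by
      rw [← exp_log (by norm_num : (0 : ℝ) < 2), ← exp_nat_mul, exp_log (by norm_num)]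
      exact exp_le_exp.2 (by nlinarith [log_nonneg (by norm_num : (1 : ℝ) ≤ 2)])
    have hsplit : p ^ ij.1 = 2 ^ ij.1 * (p / 2) ^ ij.1 := by rw [← mul_pow]; ring_nf
    rw [hsplit]
    have : 0 ≤ (M.choose ij.1 : ℝ) * (p / 2) ^ ij.1 * (1 - p) ^ ij.2 := by
      have : 0 ≤ 1 - p := by linarith
      positivity
    nlinarith
  have hlog2 : log 2 < 3 / 4 := lt_of_lt_of_le log_two_lt_d9 (by norm_num)
  calc _ ≤ ∑ ij ∈ (antidiagonal M).filter (·.1 < m), exp (log 2 * (M * p / 2)) *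
          ((M.choose ij.1 : ℝ) * (p / 2) ^ ij.1 * (1 - p) ^ ij.2) := sum_le_sum hterm
    _ ≤ exp (log 2 * (M * p / 2)) * (p / 2 + (1 - p)) ^ M := by
        rw [← mul_sum, ← sum_antidiagonal_choose_mul_pow_mul_pow]
        refine mul_le_mul_of_nonneg_left ?_ (exp_pos _).le
        exact sum_le_sum_of_subset_of_nonneg (filter_subset _ _) fun ij _ _ => by
          have : 0 ≤ 1 - p := by linarith
          positivity
    _ ≤ exp (log 2 * (M * p / 2)) * exp (-(p / 2)) ^ M :=
        mul_le_mul_of_nonneg_left (pow_le_pow_left₀ (by linarith)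
          (by linarith [add_one_le_exp (-(p / 2))]) M) (exp_pos _).le
    _ = exp (log 2 * (M * p / 2) - M * (p / 2)) := by
        rw [← exp_nat_mul, ← exp_add]; ring_nf
    _ ≤ exp (-(M * p) / 8) := exp_le_exp.2 (by nlinarith [mul_nonneg (Nat.cast_nonneg M) hp0])

theorem toMS_cons {α : Type*} {m : ℕ} (a : α) (y : Fin m → α) :
    toMS (Fin.cons a y) = a ::ₘ toMS y := by
  simp [toMS, List.ofFn_succ]

theorem card_toMS {α : Type*} {m : ℕ} (y : Fin m → α) : (toMS y).card = m := by
  simp [toMS]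

theorem card_filter_toMS {α : Type*} {m : ℕ} (y : Fin m → α) (P : α → Prop) [DecidablePred P] :
    (((toMS y).filter P).card : ℝ) = ∑ j, if P (y j) then 1 else 0 := by
  rw [toMS, ← Fin.univ_val_map, Multiset.filter_map, Multiset.card_map]
  exact_mod_cast card_filter (P ∘ y) univ

section IidSum

variable {α : Type*} [Fintype α]

theorem sum_prod_eq_pow (φ : α → ℝ) (k : ℕ) :
    ∑ y : Fin k → α, ∏ i, φ (y i) = (∑ a, φ a) ^ k := by
  rw [← Fintype.prod_sum, prod_const, card_univ, Fintype.card_fin]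

theorem sum_prod_mul_apply {w : α → ℝ} (hw1 : ∑ a, w a = 1) {k : ℕ}
    (g : α → ℝ) (j : Fin k) : ∑ y : Fin k → α, (∏ i, w (y i)) * g (y j) = ∑ a, w a * g a := by
  have hy : ∀ y : Fin k → α, (∏ i, w (y i)) * g (y j) =
      ∏ i, w (y i) * (if i = j then g (y i) else 1) := fun y => by
    rw [prod_mul_distrib, Fintype.prod_ite_eq']
  simp_rw [hy]
  rw [← Fintype.prod_sum (fun i a => w a * if i = j then g a else 1),
    Fintype.prod_eq_single j fun i hij => by simp [hij, hw1]]
  simp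

theorem sum_prod_mul_le_add {w : α → ℝ} (hw0 : ∀ a, 0 ≤ w a) (hw1 : ∑ a, w a = 1) {k : ℕ}
    {g e : (Fin k → α) → ℝ} {c : ℝ} (hge : ∀ y, g y ≤ e y + c) :
    ∑ y : Fin k → α, (∏ i, w (y i)) * g y ≤ ∑ y : Fin k → α, (∏ i, w (y i)) * e y + c := by
  have hone : ∑ y : Fin k → α, ∏ i, w (y i) = 1 := by rw [sum_prod_eq_pow, hw1, one_pow]
  calc _ ≤ ∑ y : Fin k → α, (∏ i, w (y i)) * (e y + c) :=
        sum_le_sum fun y _ => mul_le_mul_of_nonneg_left (hge y) (prod_nonneg fun i _ => hw0 _)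
    _ = ∑ y : Fin k → α, (∏ i, w (y i)) * e y + (∑ y : Fin k → α, ∏ i, w (y i)) * c := by
        rw [sum_mul, ← sum_add_distrib]
        simp_rw [mul_add]
    _ = _ := by rw [hone, one_mul]

/-- With `w` a probability vector, the expectation of `F` on a multiset of `k` i.i.d. samples. -/
noncomputable def iidSum (w : α → ℝ) (k : ℕ) (F : Multiset α → ℝ) : ℝ :=
  ∑ y : Fin k → α, (∏ i, w (y i)) * F (toMS y)

theorem iidSum_succ (w : α → ℝ) (k : ℕ) (F : Multiset α → ℝ) :
    iidSum w (k + 1) F = ∑ a, w a * iidSum w k (fun s => F (a ::ₘ s)) := by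
  rw [iidSum, ← (Fin.consEquiv fun _ => α).sum_comp, Fintype.sum_prod_type]
  refine sum_congr rfl fun a _ => ?_
  simp only [iidSum, mul_sum, Fin.consEquiv_apply, Fin.prod_univ_succ, Fin.cons_zero,
    Fin.cons_succ, mul_assoc]
  simp only [Fin.consEquiv, Equiv.coe_fn_mk, toMS_cons]

theorem iidSum_smul (c : ℝ) (w : α → ℝ) (k : ℕ) (F : Multiset α → ℝ) :
    iidSum (c • w) k F = c ^ k * iidSum w k F := by
  simp only [iidSum, mul_sum, Pi.smul_apply, smul_eq_mul, prod_mul_distrib, prod_const,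
    card_univ, Fintype.card_fin, mul_assoc]

theorem iidSum_mul_left (w : α → ℝ) (k : ℕ) (c : ℝ)
    (F : Multiset α → ℝ) : iidSum w k (fun s => c * F s) = c * iidSum w k F := by
  simp only [iidSum, mul_sum]
  exact sum_congr rfl fun _ _ => by ring

theorem iidSum_le {w : α → ℝ} (hw : ∀ a, 0 ≤ w a) {F : Multiset α → ℝ} {B : ℝ}
    (hF : ∀ s, F s ≤ B) (k : ℕ) : iidSum w k F ≤ (∑ a, w a) ^ k * B := by
  rw [← sum_prod_eq_pow, sum_mul]
  exact sum_le_sum fun y _ => mul_le_mul_of_nonneg_left (hF _) (prod_nonneg fun i _ => hw _)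

/-- The number of the `M` samples that land in `P` is binomial, and given that number `k`, those
samples are `k` i.i.d. draws from the restriction of `w` to `P`. -/
theorem iidSum_filter (w : α → ℝ) (P : α → Prop) [DecidablePred P] (M : ℕ)
    (G : Multiset α → ℝ) :
    iidSum w M (fun s => G (s.filter P)) =
      ∑ ij ∈ antidiagonal M, (M.choose ij.1 : ℝ) * (∑ a with ¬P a, w a) ^ ij.2 *
        iidSum ({a | P a}.indicator w) ij.1 G := by
  set q := ∑ a with ¬P a, w a
  induction M generalizing G with
  | zero => simp [iidSum, toMS]
  | succ M ih =>
    have hin : ∀ k (G : Multiset α → ℝ), iidSum ({a | P a}.indicator w) (k + 1) G =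
        ∑ a with P a, w a * iidSum ({a | P a}.indicator w) k (fun s => G (a ::ₘ s)) := by
      intro k G
      rw [iidSum_succ, sum_filter]
      exact sum_congr rfl fun a _ => by by_cases ha : P a <;> simp [ha]
    rw [iidSum_succ, ← sum_filter_add_sum_filter_not _ P]
    simp_rw [Multiset.filter_cons]
    have hP : ∀ a ∈ univ.filter P, w a * iidSum w M
          (fun s => G ((if P a then {a} else 0) + s.filter P)) =
        ∑ ij ∈ antidiagonal M, (M.choose ij.1 : ℝ) * q ^ ij.2 *
          (w a * iidSum ({a | P a}.indicator w) ij.1 (fun s => G (a ::ₘ s))) := by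
      intro a ha
      simp only [(mem_filter.1 ha).2, if_true, Multiset.singleton_add]
      rw [ih (fun s => G (a ::ₘ s)), mul_sum]
      exact sum_congr rfl fun _ _ => by ring
    have hnP : ∀ a ∈ univ.filter (¬P ·), w a * iidSum w M
          (fun s => G ((if P a then {a} else 0) + s.filter P)) =
        w a * iidSum w M (fun s => G (s.filter P)) := by
      intro a ha
      simp [(mem_filter.1 ha).2]
    have hpascal := sum_antidiagonal_choose_succ_mul
      (fun i j => q ^ j * iidSum ({a | P a}.indicator w) i G) M
    simp only [← mul_assoc] at hpascal
    rw [sum_congr rfl hP, sum_congr rfl hnP, sum_comm, ← sum_mul, ih, hpascal, add_comm]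
    congr 1
    · rw [mul_sum]
      exact sum_congr rfl fun ij _ => by ring
    · refine sum_congr rfl fun ij hij => ?_
      rw [Nat.choose_symm_of_eq_add (mem_antidiagonal.1 hij).symm, hin, mul_sum]

end IidSum

theorem binomial_mixture_le {p : ℝ} (hp0 : 0 ≤ p) (hp1 : p ≤ 1) {M m : ℕ} {U : ℕ → ℝ}
    {a B : ℝ} (ha : 0 ≤ a) (hB : ∀ k, U k ≤ p ^ k * B) (hm : ∀ k, m ≤ k → U k ≤ p ^ k * a) :
    ∑ ij ∈ antidiagonal M, (M.choose ij.1 : ℝ) * (1 - p) ^ ij.2 * U ij.1 ≤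
      a + B * ∑ ij ∈ (antidiagonal M).filter (·.1 < m),
        (M.choose ij.1 : ℝ) * p ^ ij.1 * (1 - p) ^ ij.2 := by
  have hq : 0 ≤ 1 - p := by linarith
  set b : ℕ × ℕ → ℝ := fun ij => (M.choose ij.1 : ℝ) * p ^ ij.1 * (1 - p) ^ ij.2
  have hb : ∀ ij, 0 ≤ b ij := fun ij => by positivity
  have hlarge : ∑ ij ∈ (antidiagonal M).filter (¬·.1 < m), b ij ≤ 1 :=
    (sum_le_sum_of_subset_of_nonneg (filter_subset _ _) fun ij _ _ => hb ij).trans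
      (by rw [sum_antidiagonal_choose_mul_pow_mul_pow, add_sub_cancel, one_pow])
  rw [← sum_filter_add_sum_filter_not _ (·.1 < m), add_comm, mul_sum]
  gcongr ?_ + ?_
  · calc _ ≤ ∑ ij ∈ (antidiagonal M).filter (¬·.1 < m), a * b ij :=
          sum_le_sum fun ij hij => by
            have := mul_le_mul_of_nonneg_left (hm ij.1 (not_lt.1 (mem_filter.1 hij).2))
              (by positivity : (0 : ℝ) ≤ M.choose ij.1 * (1 - p) ^ ij.2)
            simp only [b]
            linarith
      _ ≤ a := by rw [← mul_sum]; exact mul_le_of_le_one_right ha hlarge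
  · exact sum_le_sum fun ij _ => by
      have := mul_le_mul_of_nonneg_left (hB ij.1)
        (by positivity : (0 : ℝ) ≤ M.choose ij.1 * (1 - p) ^ ij.2)
      linarith

-- Heavy subcubes (`p ≥ δ`) receive at least `m` samples except with probability
-- `exp (-M p / 8)`; light ones contribute less than `δ`.
theorem binomial_mixture_le_of_sample_size {p ε δ : ℝ} (hp0 : 0 ≤ p) (hp1 : p ≤ 1)
    (hε : 0 ≤ ε) {M m : ℕ} (h2m : 2 * m ≤ M * δ) (h8 : 8 ≤ M * δ) {U : ℕ → ℝ}
    (hU : ∀ k, U k ≤ p ^ k * p) (hUm : 0 < p → ∀ k, m ≤ k → U k ≤ p ^ k * (p * ε)) :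
    ∑ ij ∈ antidiagonal M, (M.choose ij.1 : ℝ) * (1 - p) ^ ij.2 * U ij.1 ≤ p * ε + δ := by
  have hM : (0 : ℝ) < M := Nat.cast_pos.2 (Nat.pos_of_ne_zero fun h0 => by norm_num [h0] at h8)
  rcases lt_or_ge p δ with hlight | hheavy
  · have := binomial_mixture_le (m := 0) (M := M) hp0 hp1 hp0 hU (fun k _ => hU k)
    simp only [Nat.not_lt_zero, filter_false, sum_empty, mul_zero, add_zero] at this
    nlinarith
  · have hp : 0 < p := (show 0 < δ by nlinarith).trans_le hheavy
    have hMp : 0 < M * p := mul_pos hM hp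
    have htail := binomial_lower_tail_le hp0 hp1 (M := M) (m := m) (by nlinarith)
    have hexp : p * exp (-(M * p) / 8) ≤ δ := by
      calc p * exp (-(M * p) / 8) ≤ p * (M * p / 8)⁻¹ := by
            rw [neg_div]
            exact mul_le_mul_of_nonneg_left (exp_neg_le_inv (by positivity)) hp0
        _ = 8 / M := by field_simp
        _ ≤ δ := by rw [div_le_iff₀ hM]; linarith
    calc _ ≤ p * ε + p * ∑ ij ∈ (antidiagonal M).filter (·.1 < m),
          (M.choose ij.1 : ℝ) * p ^ ij.1 * (1 - p) ^ ij.2 :=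
          binomial_mixture_le hp0 hp1 (by positivity) hU (hUm hp)
      _ ≤ p * ε + δ := by nlinarith

-- Jensen's inequality for `exp`, then a union bound over `𝒯`.
theorem sum_mul_sup'_le {Ω β : Type*} [Fintype Ω] {Q : Ω → ℝ} (hQ0 : ∀ ω, 0 ≤ Q ω)
    (hQ1 : ∑ ω, Q ω = 1) {𝒯 : Finset β} (h𝒯 : 𝒯.Nonempty) (X : β → Ω → ℝ) {t c : ℝ}
    (ht : 0 < t) (hX : ∀ T ∈ 𝒯, ∑ ω, Q ω * exp (t * X T ω) ≤ exp c) :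
    ∑ ω, Q ω * 𝒯.sup' h𝒯 (fun T => X T ω) ≤ (log 𝒯.card + c) / t := by
  have hjensen : exp (t * ∑ ω, Q ω * 𝒯.sup' h𝒯 (fun T => X T ω)) ≤
      ∑ ω, Q ω * exp (t * 𝒯.sup' h𝒯 (fun T => X T ω)) := by
    have := convexOn_exp.map_sum_le (t := univ) (w := Q) (p := fun ω => t * 𝒯.sup' h𝒯 (X · ω))
      (fun ω _ => hQ0 ω) hQ1 (fun _ _ => Set.mem_univ _)
    simpa only [smul_eq_mul, mul_sum, mul_left_comm t] using this
  have hsup : ∀ ω, exp (t * 𝒯.sup' h𝒯 (fun T => X T ω)) ≤ ∑ T ∈ 𝒯, exp (t * X T ω) := by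
    intro ω
    obtain ⟨T, hT, hmax⟩ := exists_mem_eq_sup' h𝒯 (X · ω)
    rw [hmax]
    exact single_le_sum (f := fun T => exp (t * X T ω)) (fun _ _ => (exp_pos _).le) hT
  have hexp : exp (t * ∑ ω, Q ω * 𝒯.sup' h𝒯 (fun T => X T ω)) ≤ 𝒯.card * exp c :=
    calc _ ≤ ∑ ω, Q ω * ∑ T ∈ 𝒯, exp (t * X T ω) :=
          hjensen.trans (sum_le_sum fun ω _ => mul_le_mul_of_nonneg_left (hsup ω) (hQ0 ω))
      _ = ∑ T ∈ 𝒯, ∑ ω, Q ω * exp (t * X T ω) := by simp_rw [mul_sum]; rw [sum_comm]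
      _ ≤ ∑ T ∈ 𝒯, exp c := sum_le_sum hX
      _ = 𝒯.card * exp c := by rw [sum_const, nsmul_eq_mul]
  have hcard : (0 : ℝ) < 𝒯.card := by exact_mod_cast h𝒯.card_pos
  rw [le_div_iff₀ ht, mul_comm, ← log_exp c, ← log_mul hcard.ne' (exp_pos c).ne']
  exact (le_log_iff_exp_le (by positivity)).2 hexp

section DecisionTree

variable {n : ℕ}

theorem consistent_update_iff {x : Cube n} {ℓ : Rst n} {i : Fin n} {b : Bool}
    (hi : ℓ i = none) :
    Consistent x (Function.update ℓ i (some b)) ↔ Consistent x ℓ ∧ x i = b := by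
  constructor
  · intro h
    refine ⟨fun j b' hj => ?_, h i b (by simp)⟩
    have hji : j ≠ i := by rintro rfl; simp [hi] at hj
    exact h j b' (by rwa [Function.update_of_ne hji])
  · rintro ⟨h, rfl⟩ j b' hj
    by_cases hji : j = i
    · subst hji
      simpa using hj
    · exact h j b' (by rwa [Function.update_of_ne hji] at hj)

theorem IsDT.existsUnique_consistent {d : ℕ} {T : Finset (Rst n)} (hT : IsDT n d T)
    (x : Cube n) : ∃! ℓ, ℓ ∈ T ∧ Consistent x ℓ := by
  induction hT with
  | leaf => exact ⟨_, ⟨mem_singleton_self _, by simp [Consistent]⟩, fun ℓ h => mem_singleton.1 h.1⟩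
  | @node d i T₀ T₁ _ _ hn₀ hn₁ ih₀ ih₁ =>
    obtain ⟨ℓ₀, ⟨hℓ₀, hc₀⟩, hu₀⟩ := ih₀
    obtain ⟨ℓ₁, ⟨hℓ₁, hc₁⟩, hu₁⟩ := ih₁
    cases hxi : x i
    · refine ⟨_, ⟨mem_union_left _ (mem_image_of_mem _ hℓ₀),
        (consistent_update_iff (hn₀ _ hℓ₀)).2 ⟨hc₀, hxi⟩⟩, ?_⟩
      rintro _ ⟨hmem, hc⟩
      rcases mem_union.1 hmem with h | h <;> obtain ⟨ℓ, hℓ, rfl⟩ := mem_image.1 h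
      · rw [hu₀ ℓ ⟨hℓ, ((consistent_update_iff (hn₀ _ hℓ)).1 hc).1⟩]
      · simp [((consistent_update_iff (hn₁ _ hℓ)).1 hc).2] at hxi
    · refine ⟨_, ⟨mem_union_right _ (mem_image_of_mem _ hℓ₁),
        (consistent_update_iff (hn₁ _ hℓ₁)).2 ⟨hc₁, hxi⟩⟩, ?_⟩
      rintro _ ⟨hmem, hc⟩
      rcases mem_union.1 hmem with h | h <;> obtain ⟨ℓ, hℓ, rfl⟩ := mem_image.1 h
      · simp [((consistent_update_iff (hn₀ _ hℓ)).1 hc).2] at hxi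
      · rw [hu₁ ℓ ⟨hℓ, ((consistent_update_iff (hn₁ _ hℓ)).1 hc).1⟩]

theorem IsDT.treeHyp_eq {d : ℕ} {T : Finset (Rst n)} (hT : IsDT n d T) {ℓ : Rst n}
    (hℓ : ℓ ∈ T) {x : Cube n} (hx : Consistent x ℓ) (H : Rst n → Cube n → Bool) :
    treeHyp T H x = H ℓ x := by
  have hex : ∃ ℓ', ℓ' ∈ T ∧ Consistent x ℓ' := ⟨ℓ, hℓ, hx⟩
  rw [treeHyp, dif_pos hex, (hT.existsUnique_consistent x).unique hex.choose_spec ⟨hℓ, hx⟩]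

theorem IsDT.eq_of_depth_zero {T : Finset (Rst n)} (hT : IsDT n 0 T) : T = {fun _ => none} := by
  cases hT
  rfl

theorem IsDT.card_le {d : ℕ} {T : Finset (Rst n)} (hT : IsDT n d T) : T.card ≤ 2 ^ d := by
  induction hT with
  | leaf => simp
  | node _ _ _ _ _ ih₀ ih₁ =>
    calc _ ≤ _ := card_union_le _ _
      _ ≤ 2 ^ _ + 2 ^ _ := add_le_add (card_image_le.trans ih₀) (card_image_le.trans ih₁)
      _ = _ := by ring

theorem card_isDT_le (n d : ℕ) : (univ.filter (IsDT n d)).card ≤ n ^ (2 ^ d - 1) := by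
  induction d with
  | zero =>
    refine (card_le_one.2 fun _ h₁ _ h₂ => ?_).trans (by simp)
    rw [(mem_filter.1 h₁).2.eq_of_depth_zero, (mem_filter.1 h₂).2.eq_of_depth_zero]
  | succ d ih =>
    set S := univ.filter (IsDT n d)
    have hsub : univ.filter (IsDT n (d + 1)) ⊆ (univ ×ˢ S ×ˢ S).image
        (fun q => q.2.1.image (Function.update · q.1 (some false)) ∪
          q.2.2.image (Function.update · q.1 (some true))) := by
      intro T hT
      cases (mem_filter.1 hT).2 with
      | node i h₀ h₁ _ _ => exact mem_image.2 ⟨⟨i, _, _⟩, by simp [S, h₀, h₁], rfl⟩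
    calc _ ≤ _ := card_le_card hsub
      _ ≤ n * (S.card * S.card) := by
          refine card_image_le.trans ?_
          rw [card_product, card_product, card_univ, Fintype.card_fin]
      _ ≤ n ^ 1 * (n ^ (2 ^ d - 1) * n ^ (2 ^ d - 1)) := by rw [pow_one]; gcongr
      _ = n ^ (2 ^ (d + 1) - 1) := by
          rw [← pow_add, ← pow_add]
          congr 1
          have := Nat.one_le_two_pow (n := d)
          rw [pow_succ]
          omega

theorem log_card_isDT_le (n d : ℕ) :
    log (univ.filter (IsDT n d)).card ≤ log (2 * (n : ℝ) ^ (2 ^ d)) := by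
  have hcard := card_isDT_le n d
  rcases Nat.eq_zero_or_pos n with rfl | hn
  · have h1 : ((univ.filter (IsDT 0 d)).card : ℝ) ≤ 1 := by
      exact_mod_cast hcard.trans (by simpa using Nat.pow_le_pow_left (zero_le_one) (2 ^ d - 1))
    simpa using log_nonpos (Nat.cast_nonneg _) h1
  · have h1 : (1 : ℝ) ≤ (n : ℝ) ^ (2 ^ d) := one_le_pow₀ (by exact_mod_cast hn)
    rcases Nat.eq_zero_or_pos (univ.filter (IsDT n d)).card with h0 | hpos
    · rw [h0, Nat.cast_zero, log_zero]
      exact log_nonneg (by linarith)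
    · refine log_le_log (by exact_mod_cast hpos) ?_
      calc ((univ.filter (IsDT n d)).card : ℝ) ≤ (n : ℝ) ^ (2 ^ d - 1) := by exact_mod_cast hcard
        _ ≤ (n : ℝ) ^ (2 ^ d) := pow_le_pow_right₀ (by exact_mod_cast hn) (Nat.sub_le _ _)
        _ ≤ 2 * (n : ℝ) ^ (2 ^ d) := by linarith

theorem IsDT.sum_eq_sum_leaves {d : ℕ} {T : Finset (Rst n)} (hT : IsDT n d T) {β : Type*}
    [AddCommMonoid β] (F : Lab n → β) :
    ∑ q, F q = ∑ ℓ ∈ T, ∑ q, {q : Lab n | Consistent q.1 ℓ}.indicator F q := by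
  rw [sum_comm]
  refine sum_congr rfl fun q _ => ?_
  obtain ⟨ℓ, ⟨hℓ, hc⟩, hu⟩ := hT.existsUnique_consistent q.1
  rw [sum_eq_single_of_mem ℓ hℓ fun ℓ' hℓ' hne => Set.indicator_of_notMem
    (fun hc' => hne (hu ℓ' ⟨hℓ', hc'⟩)) _]
  exact (Set.indicator_of_mem (show q ∈ {q : Lab n | Consistent q.1 ℓ} from hc) F).symm

theorem IsDT.errD_treeHyp {d : ℕ} {T : Finset (Rst n)} (hT : IsDT n d T)
    (H : Rst n → Cube n → Bool) (w : Lab n → ℝ) :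
    errD (treeHyp T H) w = ∑ ℓ ∈ T, errD (H ℓ) ({q | Consistent q.1 ℓ}.indicator w) := by
  rw [errD, hT.sum_eq_sum_leaves]
  refine sum_congr rfl fun ℓ hℓ => sum_congr rfl fun q _ => ?_
  by_cases hc : Consistent q.1 ℓ
  · simp [Set.indicator_of_mem (show q ∈ {q : Lab n | Consistent q.1 ℓ} from hc),
      hT.treeHyp_eq hℓ hc]
  · simp [Set.indicator_of_notMem (show q ∉ {q : Lab n | Consistent q.1 ℓ} from hc)]

end DecisionTree

section Error

variable {n : ℕ}

theorem labD_nonneg {D : Cube n → ℝ} (hD0 : ∀ x, 0 ≤ D x) (f : Cube n → Bool) (q : Lab n) :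
    0 ≤ labD D f q := by
  unfold labD
  split_ifs <;> simp [hD0]

theorem sum_labD (D : Cube n → ℝ) (f : Cube n → Bool) : ∑ q, labD D f q = ∑ x, D x := by
  simp [labD, Fintype.sum_prod_type]

theorem sum_indicator_labD (D : Cube n → ℝ) (f : Cube n → Bool) (ℓ : Rst n) :
    ∑ q, {q : Lab n | Consistent q.1 ℓ}.indicator (labD D f) q = rmass D ℓ := by
  simp [rmass, labD, Set.indicator_apply, Fintype.sum_prod_type, sum_filter]

theorem indicator_labD_eq_smul {D : Cube n → ℝ} (f : Cube n → Bool) {ℓ : Rst n}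
    (hℓ : rmass D ℓ ≠ 0) :
    {q : Lab n | Consistent q.1 ℓ}.indicator (labD D f) = rmass D ℓ • labD (condD D ℓ) f := by
  ext q
  by_cases hc : Consistent q.1 ℓ <;> by_cases hf : q.2 = f q.1 <;>
    simp [labD, condD, hc, hf, mul_div_cancel₀ _ hℓ]

theorem errD_nonneg {w : Lab n → ℝ} (hw : ∀ q, 0 ≤ w q) (h : Cube n → Bool) :
    0 ≤ errD h w :=
  sum_nonneg fun q _ => by split_ifs <;> simp [hw]

theorem errD_le_sum {w : Lab n → ℝ} (hw : ∀ q, 0 ≤ w q) (h : Cube n → Bool) :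
    errD h w ≤ ∑ q, w q :=
  sum_le_sum fun q _ => by split_ifs <;> simp [hw]

theorem errD_smul (h : Cube n → Bool) (c : ℝ) (w : Lab n → ℝ) :
    errD h (c • w) = c * errD h w := by
  simp only [errD, mul_sum, Pi.smul_apply, smul_eq_mul, mul_ite, mul_zero]

end Error

section Training

variable {n : ℕ} {D : Cube n → ℝ} {f : Cube n → Bool} {A : Multiset (Lab n) → Cube n → Bool}

theorem expected_leaf_error_le (hD0 : ∀ x, 0 ≤ D x) (hD1 : ∑ x, D x = 1) (ℓ : Rst n)
    {m M : ℕ} {ε δ : ℝ} (hε : 0 ≤ ε) (h2m : 2 * m ≤ M * δ) (h8 : 8 ≤ M * δ)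
    (hA : 0 < rmass D ℓ → ∀ k, m ≤ k →
      iidSum (labD (condD D ℓ) f) k (fun s => errD (A s) (labD (condD D ℓ) f)) ≤ ε) :
    iidSum (labD D f) M (fun s => errD (A (s.filter fun q => Consistent q.1 ℓ))
        ({q : Lab n | Consistent q.1 ℓ}.indicator (labD D f))) ≤ rmass D ℓ * ε + δ := by
  have hw0 := labD_nonneg hD0 f
  have hv0 : ∀ q, 0 ≤ {q : Lab n | Consistent q.1 ℓ}.indicator (labD D f) q :=
    Set.indicator_nonneg fun q _ => hw0 q
  have hin : ∑ q with Consistent q.1 ℓ, labD D f q = rmass D ℓ := by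
    rw [← sum_indicator_labD D f ℓ, sum_filter]
    rfl
  have hout : ∑ q with ¬Consistent q.1 ℓ, labD D f q = 1 - rmass D ℓ := by
    rw [← hin, ← hD1, ← sum_labD D f, ← sum_filter_add_sum_filter_not univ
      (fun q : Lab n => Consistent q.1 ℓ) (labD D f)]
    ring
  have hp0 : 0 ≤ rmass D ℓ := hin ▸ sum_nonneg fun q _ => hw0 q
  have hp1 : rmass D ℓ ≤ 1 := by linarith [hout ▸ sum_nonneg fun q _ => hw0 q]
  have hsplit := iidSum_filter (labD D f) (fun q : Lab n => Consistent q.1 ℓ) M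
    (fun s => errD (A s) ({q : Lab n | Consistent q.1 ℓ}.indicator (labD D f)))
  beta_reduce at hsplit
  rw [hsplit, hout]
  refine binomial_mixture_le_of_sample_size hp0 hp1 hε h2m h8
    (U := fun k => iidSum ({q : Lab n | Consistent q.1 ℓ}.indicator (labD D f)) k
      fun s => errD (A s) ({q : Lab n | Consistent q.1 ℓ}.indicator (labD D f)))
    (fun k => ?_) fun hp k hk => ?_
  · simpa [sum_indicator_labD] using iidSum_le hv0 (fun s => errD_le_sum hv0 (A s)) k
  · simp_rw [indicator_labD_eq_smul f hp.ne', iidSum_smul, errD_smul, iidSum_mul_left]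
    gcongr
    exact hA hp k hk

theorem expected_tree_error_le (hD0 : ∀ x, 0 ≤ D x) (hD1 : ∑ x, D x = 1) {d : ℕ}
    {T : Finset (Rst n)} (hT : IsDT n d T) {m M : ℕ} {ε : ℝ} (hε : 0 < ε)
    (hM : ((2 : ℝ) ^ d / ε) * max (2 * (m : ℝ)) 8 ≤ M)
    (hA : ∀ ℓ ∈ T, 0 < rmass D ℓ → ∀ k, m ≤ k →
      iidSum (labD (condD D ℓ) f) k (fun s => errD (A s) (labD (condD D ℓ) f)) ≤ ε) :
    ∑ y : Fin M → Lab n, (∏ i, labD D f (y i)) *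
      errD (treeHyp T fun ρ => A ((toMS y).filter fun q => Consistent q.1 ρ)) (labD D f)
        ≤ 2 * ε := by
  set δ := ε / 2 ^ d
  have hδM : max (2 * (m : ℝ)) 8 ≤ M * δ :=
    calc max (2 * (m : ℝ)) 8 = (2 ^ d / ε * max (2 * (m : ℝ)) 8) * δ := by
          simp only [δ]; field_simp
      _ ≤ M * δ := by gcongr
  have hleaf := fun ℓ (hℓ : ℓ ∈ T) => expected_leaf_error_le (f := f) (A := A) hD0 hD1 ℓ hε.le
    ((le_max_left _ _).trans hδM) ((le_max_right _ _).trans hδM) (hA ℓ hℓ)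
  have hmass : ∑ ℓ ∈ T, rmass D ℓ = 1 := by
    simp_rw [← sum_indicator_labD D f, ← hT.sum_eq_sum_leaves, sum_labD, hD1]
  simp_rw [hT.errD_treeHyp, mul_sum]
  rw [sum_comm]
  calc _ ≤ ∑ ℓ ∈ T, (rmass D ℓ * ε + δ) := sum_le_sum hleaf
    _ = ε + T.card * δ := by rw [sum_add_distrib, ← sum_mul, hmass, sum_const, nsmul_eq_mul]; ring
    _ ≤ ε + 2 ^ d * δ := by gcongr; exact_mod_cast hT.card_le
    _ = 2 * ε := by simp only [δ]; field_simp; ring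

end Training

section Selection

variable {n : ℕ} {w : Lab n → ℝ}

theorem errS_toMS {mt : ℕ} (h : Cube n → Bool) (y : Fin mt → Lab n) :
    errS h (toMS y) = (∑ j, if h (y j).1 ≠ (y j).2 then 1 else 0) / mt := by
  rw [errS, card_toMS, card_filter_toMS]

theorem iidSum_errS (hw1 : ∑ q, w q = 1) {mt : ℕ} (hmt : 0 < mt) (h : Cube n → Bool) :
    iidSum w mt (errS h) = errD h w := by
  simp_rw [iidSum, errS_toMS, mul_div_assoc', mul_sum, ← sum_div]
  rw [sum_comm, sum_congr rfl fun j _ =>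
    sum_prod_mul_apply hw1 (fun q : Lab n => if h q.1 ≠ q.2 then (1 : ℝ) else 0) j]
  rw [sum_const, card_univ, Fintype.card_fin, nsmul_eq_mul]
  field_simp
  simp [errD]

theorem sum_mul_exp_mul_errD_sub (hw1 : ∑ q, w q = 1) (h : Cube n → Bool) (s : ℝ) :
    ∑ q, w q * exp (s * (errD h w - if h q.1 ≠ q.2 then 1 else 0)) =
      exp (s * errD h w) * (1 - errD h w + errD h w * exp (-s)) := by
  set μ := errD h w
  set X : Lab n → ℝ := fun q => if h q.1 ≠ q.2 then 1 else 0
  have hμ : μ = ∑ q, w q * X q := by simp [μ, X, errD]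
  have hq : ∀ q, w q * exp (s * (μ - X q)) =
      exp (s * μ) * (w q - w q * X q + w q * X q * exp (-s)) := by
    intro q
    by_cases hq : h q.1 ≠ q.2
    · simp only [X, hq, if_true, ne_eq, not_false_eq_true]
      rw [show s * (μ - 1) = s * μ + -s by ring, exp_add]
      ring
    · simp only [X, hq, if_false]
      ring_nf
  change ∑ q, w q * exp (s * (μ - X q)) = _
  simp_rw [hq, ← mul_sum, sum_add_distrib, sum_sub_distrib, ← sum_mul, ← hμ, hw1]

theorem iidSum_exp_errD_sub_errS_le (hw0 : ∀ q, 0 ≤ w q) (hw1 : ∑ q, w q = 1) {mt : ℕ}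
    (hmt : 0 < mt) (h : Cube n → Bool) {t : ℝ} (ht : 0 ≤ t) :
    iidSum w mt (fun s => exp (t * (errD h w - errS h s))) ≤ exp (t ^ 2 / (2 * mt)) := by
  set μ := errD h w
  set X : Lab n → ℝ := fun q => if h q.1 ≠ q.2 then 1 else 0
  set s := t / mt
  have hmt' : (mt : ℝ) ≠ 0 := by positivity
  have hfactor : ∀ y : Fin mt → Lab n,
      (∏ j, w (y j)) * exp (t * (μ - errS h (toMS y))) =
        ∏ j, w (y j) * exp (s * (μ - X (y j))) := by
    intro y
    rw [prod_mul_distrib, ← exp_sum, errS_toMS]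
    congr 2
    rw [← mul_sum, sum_sub_distrib, sum_const, card_univ, Fintype.card_fin, nsmul_eq_mul]
    simp only [s, X]
    field_simp
  have hμ0 : 0 ≤ μ := errD_nonneg hw0 h
  have hμ1 : μ ≤ 1 := hw1 ▸ errD_le_sum hw0 h
  calc _ = (exp (s * μ) * (1 - μ + μ * exp (-s))) ^ mt := by
        simp only [iidSum, hfactor]
        rw [sum_prod_eq_pow (fun q => w q * exp (s * (μ - X q))), sum_mul_exp_mul_errD_sub hw1 h s]
    _ ≤ exp (s ^ 2 / 2) ^ mt := by
        refine pow_le_pow_left₀ ?_ (bernoulli_mgf_le hμ0 hμ1 (by positivity)) mt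
        exact mul_nonneg (exp_pos _).le (by nlinarith [mul_nonneg hμ0 (exp_pos (-s)).le])
    _ = exp (t ^ 2 / (2 * mt)) := by
        rw [← exp_nat_mul]
        congr 1
        simp only [s]
        field_simp

theorem expected_error_of_empirical_minimizer_le (hw0 : ∀ q, 0 ≤ w q) (hw1 : ∑ q, w q = 1)
    {β : Type*} {𝒯 : Finset β} (h : β → Cube n → Bool) {t₀ : β} (ht₀ : t₀ ∈ 𝒯) {mt : ℕ}
    (sel : (Fin mt → Lab n) → β) (hsel : ∀ y, sel y ∈ 𝒯)
    (hmin : ∀ y, errS (h (sel y)) (toMS y) ≤ errS (h t₀) (toMS y)) {ε : ℝ} (hε : 0 < ε)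
    (hmt : log 𝒯.card ≤ 2 * ε ^ 2 * mt) :
    ∑ y : Fin mt → Lab n, (∏ j, w (y j)) * errD (h (sel y)) w ≤ errD (h t₀) w + 2 * ε := by
  have hQ0 : ∀ y : Fin mt → Lab n, 0 ≤ ∏ j, w (y j) := fun y => prod_nonneg fun j _ => hw0 _
  have hQ1 : ∑ y : Fin mt → Lab n, ∏ j, w (y j) = 1 := by rw [sum_prod_eq_pow, hw1, one_pow]
  rcases Nat.eq_zero_or_pos mt with rfl | hmt0
  · -- with no test data, the bound forces `𝒯 = {t₀}`
    have hcard : 𝒯.card ≤ 1 := by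
      have := log_nonpos_iff (Nat.cast_nonneg 𝒯.card) |>.1 (by simpa using hmt)
      exact_mod_cast this
    have hsel₀ : ∀ y, sel y = t₀ := fun y => card_le_one.1 hcard _ (hsel y) _ ht₀
    simp_rw [hsel₀, ← sum_mul, hQ1, one_mul]
    linarith
  set dev : β → (Fin mt → Lab n) → ℝ := fun T y => errD (h T) w - errS (h T) (toMS y)
  have h𝒯 : 𝒯.Nonempty := ⟨t₀, ht₀⟩
  have hpoint : ∀ y, errD (h (sel y)) w ≤ errS (h t₀) (toMS y) + 𝒯.sup' h𝒯 (dev · y) := fun y =>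
    calc errD (h (sel y)) w = errS (h (sel y)) (toMS y) + dev (sel y) y := by simp [dev]
      _ ≤ _ := add_le_add (hmin y) (le_sup' (dev · y) (hsel y))
  -- the exponent `2 ε mt` balances the two terms of the maximal inequality
  have hsup : ∑ y, (∏ j, w (y j)) * 𝒯.sup' h𝒯 (dev · y) ≤ 2 * ε := by
    have hmt' : (0 : ℝ) < mt := by exact_mod_cast hmt0
    calc _ ≤ (log 𝒯.card + (2 * ε * mt) ^ 2 / (2 * mt)) / (2 * ε * mt) :=
          sum_mul_sup'_le hQ0 hQ1 h𝒯 dev (by positivity) fun T _ =>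
            iidSum_exp_errD_sub_errS_le hw0 hw1 hmt0 (h T) (by positivity)
      _ ≤ (2 * ε ^ 2 * mt + (2 * ε * mt) ^ 2 / (2 * mt)) / (2 * ε * mt) := by gcongr
      _ = 2 * ε := by field_simp; ring
  calc _ ≤ ∑ y, (∏ j, w (y j)) * (errS (h t₀) (toMS y) + 𝒯.sup' h𝒯 (dev · y)) :=
        sum_le_sum fun y _ => mul_le_mul_of_nonneg_left (hpoint y) (hQ0 y)
    _ = iidSum w mt (errS (h t₀)) + ∑ y, (∏ j, w (y j)) * 𝒯.sup' h𝒯 (dev · y) := by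
        rw [iidSum, ← sum_add_distrib]
        simp_rw [mul_add]
    _ ≤ errD (h t₀) w + 2 * ε := by rw [iidSum_errS hw1 hmt0]; linarith

end Selection

theorem treelearn_correctness_general
    (n m d : ℕ) (ε : ℝ) (hε : 0 < ε)
    (C : Set (Cube n → Bool)) (𝒟 : Set (Cube n → ℝ))
    (A : Multiset (Lab n) → Cube n → Bool)
    (hA : ∀ D ∈ 𝒟, ∀ f ∈ C, ∀ k : ℕ, m ≤ k →
      ∑ y : Fin k → Lab n, (∏ i, labD D f (y i)) * errD (A (toMS y)) (labD D f) ≤ ε)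
    (Dstar : Cube n → ℝ) (hD0 : ∀ x, 0 ≤ Dstar x) (hD1 : ∑ x : Cube n, Dstar x = 1)
    (Tstar : Finset (Rst n)) (hTstar : IsDT n d Tstar)
    (hdecomp : ∀ ℓ ∈ Tstar, 0 < rmass Dstar ℓ → condD Dstar ℓ ∈ 𝒟)
    (f : Cube n → Bool) (hf : f ∈ C)
    (mtrain mtest : ℕ)
    (hmtrain : ((2 : ℝ) ^ d / ε) * max (2 * (m : ℝ)) 8 ≤ (mtrain : ℝ))
    (hmtest : Real.log (2 * (n : ℝ) ^ (2 ^ d)) / (2 * ε ^ 2) ≤ (mtest : ℝ))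
    (That : (Fin mtrain → Lab n) → (Fin mtest → Lab n) → Finset (Rst n))
    (hThatDT : ∀ ytr yte, IsDT n d (That ytr yte))
    (hThatMin : ∀ ytr yte, ∀ T : Finset (Rst n), IsDT n d T →
      errS (treeHyp (That ytr yte)
              (fun ρ => A ((toMS ytr).filter (fun p => Consistent p.1 ρ)))) (toMS yte) ≤
      errS (treeHyp T
              (fun ρ => A ((toMS ytr).filter (fun p => Consistent p.1 ρ)))) (toMS yte)) :
    ∑ ytr : Fin mtrain → Lab n, ∑ yte : Fin mtest → Lab n,
        ((∏ i, labD Dstar f (ytr i)) * (∏ j, labD Dstar f (yte j))) *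
          errD (treeHyp (That ytr yte)
                  (fun ρ => A ((toMS ytr).filter (fun p => Consistent p.1 ρ))))
               (labD Dstar f)
      ≤ 4 * ε := by
  set w := labD Dstar f
  set H : (Fin mtrain → Lab n) → Rst n → Cube n → Bool :=
    fun ytr ρ => A ((toMS ytr).filter fun p => Consistent p.1 ρ)
  have hw0 : ∀ q, 0 ≤ w q := labD_nonneg hD0 f
  have hw1 : ∑ q, w q = 1 := (sum_labD Dstar f).trans hD1
  have htrain : ∑ ytr : Fin mtrain → Lab n, (∏ i, w (ytr i)) * errD (treeHyp Tstar (H ytr)) w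
      ≤ 2 * ε :=
    expected_tree_error_le hD0 hD1 hTstar hε hmtrain fun ℓ hℓ hpos k hk =>
      hA _ (hdecomp ℓ hℓ hpos) f hf k hk
  have hlog : log (univ.filter (IsDT n d)).card ≤ 2 * ε ^ 2 * mtest :=
    (log_card_isDT_le n d).trans (by rw [div_le_iff₀ (by positivity)] at hmtest; linarith)
  have htest : ∀ ytr, ∑ yte : Fin mtest → Lab n, (∏ j, w (yte j)) *
      errD (treeHyp (That ytr yte) (H ytr)) w ≤ errD (treeHyp Tstar (H ytr)) w + 2 * ε :=
    fun ytr => expected_error_of_empirical_minimizer_le hw0 hw1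
      (fun T => treeHyp T (H ytr)) (mem_filter.2 ⟨mem_univ _, hTstar⟩) (That ytr)
      (fun yte => mem_filter.2 ⟨mem_univ _, hThatDT ytr yte⟩)
      (fun yte => hThatMin ytr yte Tstar hTstar) hε hlog
  calc _ = ∑ ytr, (∏ i, w (ytr i)) * ∑ yte : Fin mtest → Lab n, (∏ j, w (yte j)) *
        errD (treeHyp (That ytr yte) (H ytr)) w := by simp_rw [mul_sum, mul_assoc]; rfl
    _ ≤ ∑ ytr, (∏ i, w (ytr i)) * errD (treeHyp Tstar (H ytr)) w + 2 * ε :=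
        sum_prod_mul_le_add hw0 hw1 htest
    _ ≤ 4 * ε := by linarith

/-- correctness of `TreeLearn` (with explicit constants). Training `A` on
the restrictions of `S_train` and selecting any depth-`d` tree `T̂` minimizing the test error
on an independent test set `S_test` yields expected true error at most `4ε`, provided
`m_train ≥ (2^d/ε)·max(2m,8)` and `m_test ≥ ln(2·n^{2^d})/(2ε²)`. -/
theorem treelearn_correctness
    (n m d : ℕ) (ε : ℝ) (hε : 0 < ε)
    (C : Set (Cube n → Bool)) (𝒟 : Set (Cube n → ℝ))
    (hclosed : ∀ D ∈ 𝒟, ∀ ρ : Rst n, 0 < rmass D ρ → condD D ρ ∈ 𝒟)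
    (A : Multiset (Lab n) → Cube n → Bool)
    (hA : ∀ D ∈ 𝒟, ∀ f ∈ C, ∀ k : ℕ, m ≤ k →
      ∑ y : Fin k → Lab n, (∏ i, labD D f (y i)) * errD (A (toMS y)) (labD D f) ≤ ε)
    (Dstar : Cube n → ℝ) (hD0 : ∀ x, 0 ≤ Dstar x) (hD1 : ∑ x : Cube n, Dstar x = 1)
    (Tstar : Finset (Rst n)) (hTstar : IsDT n d Tstar)
    (hdecomp : ∀ ℓ ∈ Tstar, 0 < rmass Dstar ℓ → condD Dstar ℓ ∈ 𝒟)
    (f : Cube n → Bool) (hf : f ∈ C)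
    (mtrain mtest : ℕ)
    (hmtrain : ((2 : ℝ) ^ d / ε) * max (2 * (m : ℝ)) 8 ≤ (mtrain : ℝ))
    (hmtest : Real.log (2 * (n : ℝ) ^ (2 ^ d)) / (2 * ε ^ 2) ≤ (mtest : ℝ))
    (That : (Fin mtrain → Lab n) → (Fin mtest → Lab n) → Finset (Rst n))
    (hThatDT : ∀ ytr yte, IsDT n d (That ytr yte))
    (hThatMin : ∀ ytr yte, ∀ T : Finset (Rst n), IsDT n d T →
      errS (treeHyp (That ytr yte)
              (fun ρ => A ((toMS ytr).filter (fun p => Consistent p.1 ρ)))) (toMS yte) ≤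
      errS (treeHyp T
              (fun ρ => A ((toMS ytr).filter (fun p => Consistent p.1 ρ)))) (toMS yte)) :
    ∑ ytr : Fin mtrain → Lab n, ∑ yte : Fin mtest → Lab n,
        ((∏ i, labD Dstar f (ytr i)) * (∏ j, labD Dstar f (yte j))) *
          errD (treeHyp (That ytr yte)
                  (fun ρ => A ((toMS ytr).filter (fun p => Consistent p.1 ρ))))
               (labD Dstar f)
      ≤ 4 * ε :=
  treelearn_correctness_general n m d ε hε C 𝒟 A hA Dstar hD0 hD1 Tstar hTstar hdecomp f hf mtrain
    mtest hmtrain hmtest That hThatDT hThatMin
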